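/- arXiv:2509.03230 — 5 statements merged into one kernel-verified Lean document; each statement's English description precedes it below -/
import Mathlib

section
/- If i ≠ j and ℓ i j = (q : ℕ∞) for a natural number q, then (A ^ q) i j equals the number of injective walks (i.e., paths) of length q from i to j; that is, the entry of the q-th matrix power counts the shortest paths from i to j. -/
/-!
Entries of `A ^ k` count walks of length `k`, by induction on `k` splitting off the last step.
If a walk from `i` to `j` of length `q = ℓ i j` visited some vertex twice, cutting out the closed
sub-walk between the two visits would give a walk of length `m < q`, i.e. `(A ^ m) i j ≠ 0`,
contradicting the minimality of `q`. So every walk of length `q` from `i` to `j` is a path.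
-/

/-- The shortest path length `ℓ i j`: the least positive `k` with `(A ^ k) i j ≠ 0`,
as an element of `ℕ∞` (`⊤` if no such `k` exists), and `ℓ i i = 0`. -/
noncomputable def ell (n : ℕ) (A : Matrix (Fin n) (Fin n) ℕ) (i j : Fin n) : ℕ∞ :=
  if i = j then 0
  else sInf ((fun k : ℕ => (k : ℕ∞)) '' {k : ℕ | 1 ≤ k ∧ (A ^ k) i j ≠ 0})

open Finset

namespace Matrix

theorem mul_apply_ne_zero {l m o R : Type*} [Fintype m] [NonUnitalNonAssocSemiring R]
    [PartialOrder R] [CanonicallyOrderedAdd R] [NoZeroDivisors R]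
    {M : Matrix l m R} {N : Matrix m o R} {x : l} {y : m} {z : o}
    (hM : M x y ≠ 0) (hN : N y z ≠ 0) : (M * N) x z ≠ 0 := by
  rw [mul_apply, Ne, sum_eq_zero_iff]
  exact fun h => mul_ne_zero hM hN (h y (mem_univ y))

variable {ι R : Type*} [Fintype ι] [DecidableEq ι]
  [Semiring R] [PartialOrder R] [CanonicallyOrderedAdd R] [NoZeroDivisors R] [Nontrivial R]

theorem pow_apply_ne_zero_of_walk {A : Matrix ι ι R} {k : ℕ} {v : Fin (k + 1) → ι}
    (hv : ∀ t : Fin k, A (v t.castSucc) (v t.succ) ≠ 0) {a b : Fin (k + 1)} (hab : a ≤ b) :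
    (A ^ (b - a : ℕ)) (v a) (v b) ≠ 0 := by
  induction b using Fin.induction with
  | zero =>
    obtain rfl : a = 0 := le_antisymm hab (Fin.zero_le a)
    simp
  | succ t ih =>
    rcases hab.eq_or_lt with rfl | hlt
    · simp
    · have hat : a ≤ t.castSucc := Fin.le_castSucc_iff.mpr hlt
      have hlen : (t.succ - a : ℕ) = (t.castSucc - a : ℕ) + 1 := by
        simp only [Fin.val_succ, Fin.val_castSucc]
        have : (a : ℕ) ≤ t := hat
        omega
      rw [hlen, pow_succ]
      exact mul_apply_ne_zero (ih hat) (hv t)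

theorem injective_of_walk_of_pow_apply_eq_zero {A : Matrix ι ι R} {i j : ι} {k : ℕ}
    (hshort : ∀ m < k, (A ^ m) i j = 0) {v : Fin (k + 1) → ι} (h0 : v 0 = i)
    (hlast : v (Fin.last k) = j) (hv : ∀ t : Fin k, A (v t.castSucc) (v t.succ) ≠ 0) :
    Function.Injective v := by
  intro a b hab
  by_contra hne
  wlog hlt : a < b generalizing a b
  · exact this hab.symm (Ne.symm hne) (lt_of_le_of_ne (not_lt.mp hlt) (Ne.symm hne))
  have hprefix := pow_apply_ne_zero_of_walk hv (Fin.zero_le a)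
  have hsuffix := pow_apply_ne_zero_of_walk hv (Fin.le_last b)
  rw [hab] at hprefix
  have hcut := mul_apply_ne_zero hprefix hsuffix
  rw [← pow_add, h0, hlast] at hcut
  refine hcut (hshort _ ?_)
  have : (a : ℕ) < b := hlt
  simp only [Fin.val_zero, Fin.val_last]
  omega

def walkFinset (A : Matrix ι ι ℕ) (k : ℕ) (i j : ι) : Finset (Fin (k + 1) → ι) :=
  {v | v 0 = i ∧ v (Fin.last k) = j ∧ ∀ t : Fin k, A (v t.castSucc) (v t.succ) = 1}

theorem card_walkFinset_succ (A : Matrix ι ι ℕ) (k : ℕ) (i j : ι) :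
    #(walkFinset A (k + 1) i j) = ∑ m with A m j = 1, #(walkFinset A k i m) := by
  rw [← card_sigma]
  refine card_nbij' (fun v => ⟨v (Fin.last k).castSucc, Fin.init v⟩)
    (fun w => Fin.snoc w.2 j) ?_ ?_ ?_ ?_
  · intro v hv
    simp only [coe_sigma, walkFinset, coe_filter, mem_univ, true_and, Set.mem_sigma_iff,
      Set.mem_ofPred_eq, Fin.init] at hv ⊢
    obtain ⟨h0, hlast, hstep⟩ := hv
    refine ⟨by simpa [hlast] using hstep (Fin.last k), by simpa using h0, fun t => ?_⟩
    simpa using hstep t.castSucc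
  · rintro ⟨m, w⟩ hw
    simp only [coe_sigma, walkFinset, coe_filter, mem_univ, true_and, Set.mem_sigma_iff,
      Set.mem_ofPred_eq] at hw ⊢
    obtain ⟨hmj, h0, hlast, hstep⟩ := hw
    refine ⟨by simpa using h0, by simp, fun t => ?_⟩
    induction t using Fin.lastCases with
    | last => simpa [hlast] using hmj
    | cast s =>
      rw [Fin.succ_castSucc, Fin.snoc_castSucc, Fin.snoc_castSucc]
      exact hstep s
  · intro v hv
    simp only [walkFinset, coe_filter, mem_univ, true_and, Set.mem_ofPred_eq] at hv
    simp [← hv.2.1]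
  · rintro ⟨m, w⟩ hw
    simp only [coe_sigma, walkFinset, coe_filter, mem_univ, true_and, Set.mem_sigma_iff,
      Set.mem_ofPred_eq] at hw
    simp [hw.2.2.1]

theorem pow_apply_eq_card_walkFinset {A : Matrix ι ι ℕ} (hA : ∀ x y, A x y = 0 ∨ A x y = 1)
    (k : ℕ) (i j : ι) : (A ^ k) i j = #(walkFinset A k i j) := by
  induction k generalizing j with
  | zero =>
    rcases eq_or_ne i j with rfl | hij
    · rw [pow_zero, one_apply_eq, eq_comm, card_eq_one]
      refine ⟨fun _ => i, eq_singleton_iff_unique_mem.mpr ⟨by simp [walkFinset], fun v hv => ?_⟩⟩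
      simp only [walkFinset, mem_filter, mem_univ, true_and] at hv
      exact funext fun t => Fin.fin_one_eq_zero t ▸ hv.1
    · rw [pow_zero, one_apply_ne hij, eq_comm, card_eq_zero, eq_empty_iff_forall_notMem]
      intro v hv
      simp only [walkFinset, mem_filter, mem_univ, true_and] at hv
      exact hij (hv.1.symm.trans hv.2.1)
  | succ k ih =>
    rw [card_walkFinset_succ, pow_succ, mul_apply, sum_filter]
    refine sum_congr rfl fun m _ => ?_
    rcases hA m j with h | h <;> simp [ih, h]

end Matrix

theorem pow_apply_eq_zero_of_lt_ell {n : ℕ} {A : Matrix (Fin n) (Fin n) ℕ} {i j : Fin n}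
    (hij : i ≠ j) {m : ℕ} (hm : (m : ℕ∞) < ell n A i j) : (A ^ m) i j = 0 := by
  by_contra hne
  rcases Nat.eq_zero_or_pos m with rfl | hm0
  · simp [Matrix.one_apply_ne hij] at hne
  · rw [ell, if_neg hij] at hm
    have hmem : (m : ℕ∞) ∈ (fun k : ℕ => (k : ℕ∞)) '' {k : ℕ | 1 ≤ k ∧ (A ^ k) i j ≠ 0} :=
      ⟨m, ⟨hm0, hne⟩, rfl⟩
    exact (sInf_le hmem).not_gt hm

theorem matrix_power_counts_shortest_paths_general (n : ℕ)
    (A : Matrix (Fin n) (Fin n) ℕ)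
    (hA : ∀ i j, A i j = 0 ∨ A i j = 1)
    (i j : Fin n) (hij : i ≠ j) (q : ℕ) (hq : ell n A i j = (q : ℕ∞)) :
    (A ^ q) i j =
      Set.ncard {v : Fin (q + 1) → Fin n |
        (v 0 = i ∧ v (Fin.last q) = j ∧
          ∀ t : Fin q, A (v t.castSucc) (v t.succ) = 1) ∧
        Function.Injective v} := by
  have hshort : ∀ m < q, (A ^ m) i j = 0 := fun m hm =>
    pow_apply_eq_zero_of_lt_ell hij (hq ▸ Nat.cast_lt.mpr hm)
  rw [Matrix.pow_apply_eq_card_walkFinset hA, ← Set.ncard_coe_finset]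
  congr 1
  ext v
  simp only [Matrix.walkFinset, coe_filter, mem_univ, true_and, Set.mem_ofPred_eq]
  refine (and_iff_left_of_imp fun ⟨h0, hlast, hstep⟩ => ?_).symm
  exact Matrix.injective_of_walk_of_pow_apply_eq_zero hshort h0 hlast
    fun t => (hstep t).symm ▸ one_ne_zero

/-- If `i ≠ j` and `ℓ i j = q` for a natural number `q`, then `(A ^ q) i j`
equals the number of injective walks (paths) of length `q` from `i` to `j`. -/
theorem matrix_power_counts_shortest_paths (n : ℕ) (hn : 2 ≤ n)
    (A : Matrix (Fin n) (Fin n) ℕ)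
    (hA : ∀ i j, A i j = 0 ∨ A i j = 1) (hdiag : ∀ i, A i i = 0)
    (i j : Fin n) (hij : i ≠ j) (q : ℕ) (hq : ell n A i j = (q : ℕ∞)) :
    (A ^ q) i j =
      Set.ncard {v : Fin (q + 1) → Fin n |
        (v 0 = i ∧ v (Fin.last q) = j ∧
          ∀ t : Fin q, A (v t.castSucc) (v t.succ) = 1) ∧
        Function.Injective v} :=
  matrix_power_counts_shortest_paths_general n A hA i j hij q hq
end

section
/- Assume A is strongly connected, i.e., for all i ≠ j there exists k ≥ 1 with (A ^ k) i j ≠ 0, and let d be the diameter of the graph, i.e., the maximum over all pairs i ≠ j of ℓ i j (all of which are finite). Then for every natural number h with d ≤ h ≤ n − 1 and all i ≠ j: ℓh i j = ℓd i j = ℓ i j < ⊤ and ch i j = cd i j = c(n−1) i j > 0. -/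
open scoped Classical in
/-- The `K`-path length matrix entry `ℓK i j`. -/
noncomputable def ellK (n : ℕ) (A : Matrix (Fin n) (Fin n) ℕ) (K : ℕ) (i j : Fin n) : ℕ∞ :=
  if i = j then 0
  else sInf ((fun k : ℕ => (k : ℕ∞)) '' {k : ℕ | 1 ≤ k ∧ k ≤ K ∧ (A ^ k) i j ≠ 0})

open scoped Classical in
/-- The `K`-path counter matrix entry `cK i j`. -/
noncomputable def cKmat (n : ℕ) (A : Matrix (Fin n) (Fin n) ℕ) (K : ℕ) (i j : Fin n) : ℕ :=
  if i = j then 1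
  else if ∃ k : ℕ, 1 ≤ k ∧ k ≤ K ∧ (A ^ k) i j ≠ 0 then
    (A ^ sInf {k : ℕ | 1 ≤ k ∧ k ≤ K ∧ (A ^ k) i j ≠ 0}) i j
  else 0

lemma sInf_image_coe (S : Set ℕ) (hS : S.Nonempty) :
    sInf ((fun k : ℕ => (k : ℕ∞)) '' S) = ((sInf S : ℕ) : ℕ∞) := by
  apply le_antisymm
  · exact sInf_le ⟨sInf S, Nat.sInf_mem hS, rfl⟩
  · apply le_sInf
    rintro _ ⟨k, hk, rfl⟩
    show ((sInf S : ℕ) : ℕ∞) ≤ (k : ℕ∞)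
    exact_mod_cast Nat.sInf_le hk

/-- If `A` is strongly connected and `d` is the diameter (the maximum of
`ℓ i j` over all `i ≠ j`, all finite), then for every `h` with `d ≤ h ≤ n - 1` and all
`i ≠ j`: `ℓh i j = ℓd i j = ℓ i j < ⊤` and `ch i j = cd i j = c(n−1) i j > 0`. -/
theorem ellK_cK_stabilize_at_diameter (n : ℕ) (hn : 2 ≤ n)
    (A : Matrix (Fin n) (Fin n) ℕ)
    (hA : ∀ i j, A i j = 0 ∨ A i j = 1) (hdiag : ∀ i, A i i = 0)
    (hconn : ∀ i j : Fin n, i ≠ j → ∃ k : ℕ, 1 ≤ k ∧ (A ^ k) i j ≠ 0)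
    (d : ℕ)
    (hd_ub : ∀ i j : Fin n, i ≠ j → ell n A i j ≤ (d : ℕ∞))
    (hd_attained : ∃ i j : Fin n, i ≠ j ∧ ell n A i j = (d : ℕ∞))
    (h : ℕ) (hdh : d ≤ h) (hhn : h ≤ n - 1)
    (i j : Fin n) (hij : i ≠ j) :
    (ellK n A h i j = ellK n A d i j ∧
      ellK n A d i j = ell n A i j ∧
      ell n A i j < ⊤) ∧
    (cKmat n A h i j = cKmat n A d i j ∧
      cKmat n A d i j = cKmat n A (n - 1) i j ∧
      0 < cKmat n A (n - 1) i j) := by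
  classical
  set S : Set ℕ := {k : ℕ | 1 ≤ k ∧ (A ^ k) i j ≠ 0} with hSdef
  have hSne : S.Nonempty := hconn i j hij
  set q : ℕ := sInf S with hq
  have hqmem : q ∈ S := Nat.sInf_mem hSne
  have hell : ell n A i j = (q : ℕ∞) := by
    rw [ell, if_neg hij, sInf_image_coe S hSne]
  have hqd : q ≤ d := by
    have := hd_ub i j hij
    rw [hell] at this
    exact_mod_cast this
  -- For any K with q ≤ K, the truncated set has the same infimum
  have key : ∀ K : ℕ, q ≤ K →
      sInf {k : ℕ | 1 ≤ k ∧ k ≤ K ∧ (A ^ k) i j ≠ 0} = q := by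
    intro K hK
    set T : Set ℕ := {k : ℕ | 1 ≤ k ∧ k ≤ K ∧ (A ^ k) i j ≠ 0} with hT
    have hqT : q ∈ T := ⟨hqmem.1, hK, hqmem.2⟩
    have hTne : T.Nonempty := ⟨q, hqT⟩
    apply le_antisymm (Nat.sInf_le hqT)
    have := Nat.sInf_mem hTne
    exact Nat.sInf_le ⟨this.1, this.2.2⟩
  have hellK : ∀ K : ℕ, q ≤ K → ellK n A K i j = (q : ℕ∞) := by
    intro K hK
    have hT : {k : ℕ | 1 ≤ k ∧ k ≤ K ∧ (A ^ k) i j ≠ 0}.Nonempty :=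
      ⟨q, hqmem.1, hK, hqmem.2⟩
    rw [ellK, if_neg hij, sInf_image_coe _ hT, key K hK]
  have hcK : ∀ K : ℕ, q ≤ K → cKmat n A K i j = (A ^ q) i j := by
    intro K hK
    rw [cKmat, if_neg hij, if_pos ⟨q, hqmem.1, hK, hqmem.2⟩, key K hK]
  have hdn : d ≤ n - 1 := hdh.trans hhn
  refine ⟨⟨?_, ?_, ?_⟩, ?_, ?_, ?_⟩
  · rw [hellK h (hqd.trans hdh), hellK d hqd]
  · rw [hellK d hqd, hell]
  · rw [hell]; exact_mod_cast lt_top_iff_ne_top.2 (by simp)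
  · rw [hcK h (hqd.trans hdh), hcK d hqd]
  · rw [hcK d hqd, hcK (n - 1) (hqd.trans hdn)]
  · rw [hcK (n - 1) (hqd.trans hdn)]
    exact Nat.pos_of_ne_zero hqmem.2
end

section
/- For all natural numbers K̂, K̃ with 1 ≤ K̂ < K̃ ≤ n − 1 and every node i, the connectivity centralities satisfy (degout i : ℝ≥0∞) ≤ ĥout K̂ i ≤ ĥout K̃ i and (degin i : ℝ≥0∞) ≤ ĥin K̂ i ≤ ĥin K̃ i. -/
open scoped ENNReal

/-- The out-degree of node `i`. -/
def degout (n : ℕ) (A : Matrix (Fin n) (Fin n) ℕ) (i : Fin n) : ℕ :=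
  ∑ k : Fin n, A i k

/-- The in-degree of node `i`. -/
def degin (n : ℕ) (A : Matrix (Fin n) (Fin n) ℕ) (i : Fin n) : ℕ :=
  ∑ k : Fin n, A k i

/-- The connectivity `K_out`-centrality of node `i`. -/
noncomputable def hatHout (n : ℕ) (A : Matrix (Fin n) (Fin n) ℕ) (K : ℕ) (i : Fin n) : ℝ≥0∞ :=
  ∑ j ∈ Finset.univ.erase i, (cKmat n A K i j : ℝ≥0∞) / (ellK n A K i j : ℝ≥0∞)

/-- The connectivity `K_in`-centrality of node `i`. -/
noncomputable def hatHin (n : ℕ) (A : Matrix (Fin n) (Fin n) ℕ) (K : ℕ) (i : Fin n) : ℝ≥0∞ :=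
  ∑ j ∈ Finset.univ.erase i, (cKmat n A K j i : ℝ≥0∞) / (ellK n A K j i : ℝ≥0∞)

/-- The global `K`-connectivity `cG K`. -/
noncomputable def globalConn (n : ℕ) (A : Matrix (Fin n) (Fin n) ℕ) (K : ℕ) : ℝ≥0∞ :=
  ((n : ℝ≥0∞) * ((n : ℝ≥0∞) - 1))⁻¹ *
    ∑ i : Fin n, ∑ j ∈ Finset.univ.erase i, (cKmat n A K i j : ℝ≥0∞) / (ellK n A K i j : ℝ≥0∞)


open scoped Classical in
lemma ellK_eq_sInf (n : ℕ) (A : Matrix (Fin n) (Fin n) ℕ) (K : ℕ) {i j : Fin n} (hij : i ≠ j)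
    (h : {k : ℕ | 1 ≤ k ∧ k ≤ K ∧ (A ^ k) i j ≠ 0}.Nonempty) :
    ellK n A K i j = (sInf {k : ℕ | 1 ≤ k ∧ k ≤ K ∧ (A ^ k) i j ≠ 0} : ℕ) := by
  rw [ellK, if_neg hij]
  apply le_antisymm
  · exact sInf_le ⟨_, Nat.sInf_mem h, rfl⟩
  · apply le_sInf
    rintro _ ⟨k, hk, rfl⟩
    simpa using (Nat.cast_le (α := ℕ∞)).mpr (Nat.sInf_le hk)

open scoped Classical in
lemma term_mono (n : ℕ) (A : Matrix (Fin n) (Fin n) ℕ) {K K' : ℕ} (hKK : K ≤ K')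
    {i j : Fin n} (hij : i ≠ j) :
    (cKmat n A K i j : ℝ≥0∞) / (ellK n A K i j : ℝ≥0∞) ≤
      (cKmat n A K' i j : ℝ≥0∞) / (ellK n A K' i j : ℝ≥0∞) := by
  by_cases h : ∃ k : ℕ, 1 ≤ k ∧ k ≤ K ∧ (A ^ k) i j ≠ 0
  · set S := {k : ℕ | 1 ≤ k ∧ k ≤ K ∧ (A ^ k) i j ≠ 0} with hSdef
    set S' := {k : ℕ | 1 ≤ k ∧ k ≤ K' ∧ (A ^ k) i j ≠ 0} with hS'def
    have hsub : S ⊆ S' := fun k hk => ⟨hk.1, hk.2.1.trans hKK, hk.2.2⟩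
    have hS : S.Nonempty := h
    have hS' : S'.Nonempty := hS.mono hsub
    have hle : sInf S' ≤ sInf S := Nat.sInf_le (hsub (Nat.sInf_mem hS))
    have hmemS : sInf S' ∈ S := by
      have hm := Nat.sInf_mem hS'
      exact ⟨hm.1, hle.trans (Nat.sInf_mem hS).2.1, hm.2.2⟩
    have hq : sInf S' = sInf S := le_antisymm hle (Nat.sInf_le hmemS)
    have hc : cKmat n A K i j = cKmat n A K' i j := by
      rw [cKmat, cKmat, if_neg hij, if_neg hij, if_pos h, if_pos ⟨_, Nat.sInf_mem hS'⟩, hq]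
    have hl : ellK n A K i j = ellK n A K' i j := by
      rw [ellK_eq_sInf n A K hij hS, ellK_eq_sInf n A K' hij hS', hq]
    rw [hc, hl]
  · have hc : cKmat n A K i j = 0 := by rw [cKmat, if_neg hij, if_neg h]
    simp [hc]

open scoped Classical in
lemma term_ge (n : ℕ) (A : Matrix (Fin n) (Fin n) ℕ) {K : ℕ} (hK : 1 ≤ K)
    {i j : Fin n} (hij : i ≠ j) (hA : A i j = 0 ∨ A i j = 1) :
    (A i j : ℝ≥0∞) ≤ (cKmat n A K i j : ℝ≥0∞) / (ellK n A K i j : ℝ≥0∞) := by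
  rcases hA with h0 | h1
  · simp [h0]
  · set S := {k : ℕ | 1 ≤ k ∧ k ≤ K ∧ (A ^ k) i j ≠ 0} with hSdef
    have hmem : 1 ∈ S := ⟨le_refl 1, hK, by simp [pow_one, h1]⟩
    have hS : S.Nonempty := ⟨1, hmem⟩
    have hq : sInf S = 1 := le_antisymm (Nat.sInf_le hmem) (Nat.sInf_mem hS).1
    have hc : cKmat n A K i j = 1 := by
      rw [cKmat, if_neg hij, if_pos ⟨1, hmem⟩]
      show (A ^ sInf S) i j = 1
      rw [hq, pow_one, h1]
    have hl : ellK n A K i j = 1 := by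
      rw [ellK_eq_sInf n A K hij hS, hq]; rfl
    rw [hc, hl, h1]
    simp

/-- for `1 ≤ K̂ < K̃ ≤ n - 1` and every node `i`,
`degout i ≤ ĥout K̂ i ≤ ĥout K̃ i` and `degin i ≤ ĥin K̂ i ≤ ĥin K̃ i`. -/
theorem hatH_monotone (n : ℕ) (hn : 2 ≤ n)
    (A : Matrix (Fin n) (Fin n) ℕ)
    (hA : ∀ i j, A i j = 0 ∨ A i j = 1) (hdiag : ∀ i, A i i = 0)
    (Khat Ktilde : ℕ) (h1 : 1 ≤ Khat) (h2 : Khat < Ktilde) (h3 : Ktilde ≤ n - 1)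
    (i : Fin n) :
    ((degout n A i : ℝ≥0∞) ≤ hatHout n A Khat i ∧
      hatHout n A Khat i ≤ hatHout n A Ktilde i) ∧
    ((degin n A i : ℝ≥0∞) ≤ hatHin n A Khat i ∧
      hatHin n A Khat i ≤ hatHin n A Ktilde i) := by
  have hK1 : (1:ℕ) ≤ Ktilde := h1.trans h2.le
  have hmono : ∀ {x y : Fin n}, x ≠ y →
      (cKmat n A Khat x y : ℝ≥0∞) / (ellK n A Khat x y : ℝ≥0∞) ≤
      (cKmat n A Ktilde x y : ℝ≥0∞) / (ellK n A Ktilde x y : ℝ≥0∞) :=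
    fun h => term_mono n A h2.le h
  have hdegout : (degout n A i : ℝ≥0∞) = ∑ j ∈ Finset.univ.erase i, (A i j : ℝ≥0∞) := by
    rw [degout, Nat.cast_sum]
    rw [← Finset.sum_erase_add _ _ (Finset.mem_univ i), hdiag i]
    simp
  have hdegin : (degin n A i : ℝ≥0∞) = ∑ j ∈ Finset.univ.erase i, (A j i : ℝ≥0∞) := by
    rw [degin, Nat.cast_sum]
    rw [← Finset.sum_erase_add _ _ (Finset.mem_univ i), hdiag i]
    simp
  refine ⟨⟨?_, ?_⟩, ?_, ?_⟩
  · rw [hdegout, hatHout]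
    exact Finset.sum_le_sum fun j hj =>
      term_ge n A h1 (Ne.symm (Finset.mem_erase.mp hj).1) (hA i j)
  · exact Finset.sum_le_sum fun j hj => hmono (Ne.symm (Finset.mem_erase.mp hj).1)
  · rw [hdegin, hatHin]
    exact Finset.sum_le_sum fun j hj =>
      term_ge n A h1 (Finset.mem_erase.mp hj).1 (hA j i)
  · exact Finset.sum_le_sum fun j hj => hmono (Finset.mem_erase.mp hj).1
end

section
/- For any edge of the graph, i.e., vertices i, j with A i j = 1, the edge K-connectivity centrality ĥ K i j := ĥout K i * ĥin K j satisfies ĥ 1 i j = (degout i : ℝ≥0∞) * (degin j : ℝ≥0∞) and is nondecreasing in K: ĥ 1 i j ≤ ĥ 2 i j ≤ ⋯ ≤ ĥ (n−1) i j. -/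
open scoped ENNReal

/-- The edge `K`-connectivity centrality of an edge `e(i → j)`. -/
noncomputable def edgeConn (n : ℕ) (A : Matrix (Fin n) (Fin n) ℕ) (K : ℕ) (i j : Fin n) : ℝ≥0∞ :=
  hatHout n A K i * hatHin n A K j

/-!
The summand `cK i j / ℓK i j` depends only on the least length `q ≤ K` of a walk from `i` to `j`:
it is `(A ^ q) i j / q`, or `0` when there is no such walk. Raising `K` cannot lower `q` once it
exists, so each summand, hence each centrality, is monotone in `K`. For `K = 1` the only candidate
is `q = 1`, so the summand is `A i j`, and summing over `j ≠ i` (the diagonal vanishes) gives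
the degrees.
-/

theorem Nat.sInf_eq_sInf_of_subset {s t : Set ℕ} (hst : s ⊆ t) (h : sInf t ∈ s) :
    sInf s = sInf t :=
  le_antisymm (Nat.sInf_le h) (Nat.sInf_le (hst (Nat.sInf_mem ⟨_, h⟩)))

section walkLengths

variable {ι R : Type*} [Fintype ι] [DecidableEq ι] [Semiring R]

def walkLengths (A : Matrix ι ι R) (K : ℕ) (i j : ι) : Set ℕ :=
  {k | 1 ≤ k ∧ k ≤ K ∧ (A ^ k) i j ≠ 0}

variable {A : Matrix ι ι R} {K K' : ℕ} {i j : ι}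

theorem walkLengths_mono (hK : K ≤ K') : walkLengths A K i j ⊆ walkLengths A K' i j :=
  fun _ ⟨h1, hk, hA⟩ => ⟨h1, hk.trans hK, hA⟩

theorem sInf_walkLengths_eq (hK : K ≤ K') (hne : (walkLengths A K i j).Nonempty) :
    sInf (walkLengths A K i j) = sInf (walkLengths A K' i j) := by
  apply Nat.sInf_eq_sInf_of_subset (walkLengths_mono hK)
  obtain ⟨h1, -, hA⟩ := Nat.sInf_mem (hne.mono (walkLengths_mono hK))
  have hle : sInf (walkLengths A K' i j) ≤ sInf (walkLengths A K i j) :=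
    Nat.sInf_le (walkLengths_mono hK (Nat.sInf_mem hne))
  exact ⟨h1, hle.trans (Nat.sInf_mem hne).2.1, hA⟩

theorem mem_walkLengths_one {k : ℕ} : k ∈ walkLengths A 1 i j ↔ k = 1 ∧ A i j ≠ 0 := by
  constructor
  · rintro ⟨h1, h1', hA⟩
    obtain rfl : k = 1 := le_antisymm h1' h1
    exact ⟨rfl, by rwa [pow_one] at hA⟩
  · rintro ⟨rfl, hA⟩
    exact ⟨le_rfl, le_rfl, by rwa [pow_one]⟩

end walkLengths

section pathMatrices

variable {n : ℕ} {A : Matrix (Fin n) (Fin n) ℕ} {K K' : ℕ} {i j : Fin n}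

theorem ellK_of_ne (hij : i ≠ j) (hne : (walkLengths A K i j).Nonempty) :
    ellK n A K i j = (sInf (walkLengths A K i j) : ℕ) := by
  rw [ellK, if_neg hij, ENat.natCast_sInf hne, sInf_image]
  rfl

theorem cKmat_of_ne (hij : i ≠ j) (hne : (walkLengths A K i j).Nonempty) :
    cKmat n A K i j = (A ^ sInf (walkLengths A K i j)) i j := by
  rw [cKmat, if_neg hij]
  exact if_pos hne

theorem cKmat_of_ne_of_empty (hij : i ≠ j) (hemp : walkLengths A K i j = ∅) :
    cKmat n A K i j = 0 := by
  rw [cKmat, if_neg hij]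
  exact if_neg (Set.not_nonempty_iff_eq_empty.mpr hemp)

theorem cKmat_div_ellK_mono (hK : K ≤ K') (i j : Fin n) :
    (cKmat n A K i j : ℝ≥0∞) / ellK n A K i j ≤ (cKmat n A K' i j : ℝ≥0∞) / ellK n A K' i j := by
  rcases eq_or_ne i j with rfl | hij
  · simp [cKmat, ellK]
  rcases (walkLengths A K i j).eq_empty_or_nonempty with hemp | hne
  · simp [cKmat_of_ne_of_empty hij hemp]
  have hne' := hne.mono (walkLengths_mono hK)
  rw [cKmat_of_ne hij hne, cKmat_of_ne hij hne', ellK_of_ne hij hne, ellK_of_ne hij hne',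
    sInf_walkLengths_eq hK hne]

theorem cKmat_div_ellK_one (hij : i ≠ j) :
    (cKmat n A 1 i j : ℝ≥0∞) / ellK n A 1 i j = A i j := by
  rcases eq_or_ne (A i j) 0 with hA | hA
  · have hemp : walkLengths A 1 i j = ∅ :=
      Set.eq_empty_of_forall_notMem fun k hk => (mem_walkLengths_one.mp hk).2 hA
    simp [cKmat_of_ne_of_empty hij hemp, hA]
  · have hone : walkLengths A 1 i j = {1} :=
      Set.eq_singleton_iff_unique_mem.mpr
        ⟨mem_walkLengths_one.mpr ⟨rfl, hA⟩, fun k hk => (mem_walkLengths_one.mp hk).1⟩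
    have hne : (walkLengths A 1 i j).Nonempty := by simp [hone]
    rw [cKmat_of_ne hij hne, ellK_of_ne hij hne, hone]
    simp

theorem hatHout_mono (i : Fin n) : Monotone fun K => hatHout n A K i :=
  fun _ _ hK => Finset.sum_le_sum fun j _ => cKmat_div_ellK_mono hK i j

theorem hatHin_mono (j : Fin n) : Monotone fun K => hatHin n A K j :=
  fun _ _ hK => Finset.sum_le_sum fun i _ => cKmat_div_ellK_mono hK i j

theorem edgeConn_mono (i j : Fin n) : Monotone fun K => edgeConn n A K i j :=
  fun _ _ hK => mul_le_mul' (hatHout_mono i hK) (hatHin_mono j hK)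

variable (hdiag : ∀ i, A i i = 0)
include hdiag

theorem hatHout_one (i : Fin n) : hatHout n A 1 i = degout n A i := by
  rw [hatHout, degout, Nat.cast_sum, ← Finset.sum_erase Finset.univ (a := i) (by simp [hdiag i])]
  exact Finset.sum_congr rfl fun j hj => cKmat_div_ellK_one (Finset.ne_of_mem_erase hj).symm

theorem hatHin_one (j : Fin n) : hatHin n A 1 j = degin n A j := by
  rw [hatHin, degin, Nat.cast_sum, ← Finset.sum_erase Finset.univ (a := j) (by simp [hdiag j])]
  exact Finset.sum_congr rfl fun i hi => cKmat_div_ellK_one (Finset.ne_of_mem_erase hi)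

end pathMatrices

theorem edgeConn_one_and_monotone_general (n : ℕ)
    (A : Matrix (Fin n) (Fin n) ℕ)
    (hdiag : ∀ i, A i i = 0)
    (i j : Fin n) :
    edgeConn n A 1 i j = (degout n A i : ℝ≥0∞) * (degin n A j : ℝ≥0∞) ∧
    (∀ K K' : ℕ, 1 ≤ K → K ≤ K' → K' ≤ n - 1 →
      edgeConn n A K i j ≤ edgeConn n A K' i j) :=
  ⟨by rw [edgeConn, hatHout_one hdiag, hatHin_one hdiag],
    fun _ _ _ hK _ => edgeConn_mono i j hK⟩

/-- for an edge `e(i → j)` (i.e. `A i j = 1`), the edge `K`-connectivity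
centrality satisfies `ĥ 1 i j = degout i * degin j` and is nondecreasing in `K`. -/
theorem edgeConn_one_and_monotone (n : ℕ) (hn : 2 ≤ n)
    (A : Matrix (Fin n) (Fin n) ℕ)
    (hA : ∀ i j, A i j = 0 ∨ A i j = 1) (hdiag : ∀ i, A i i = 0)
    (i j : Fin n) (hij : A i j = 1) :
    edgeConn n A 1 i j = (degout n A i : ℝ≥0∞) * (degin n A j : ℝ≥0∞) ∧
    (∀ K K' : ℕ, 1 ≤ K → K ≤ K' → K' ≤ n - 1 →
      edgeConn n A K i j ≤ edgeConn n A K' i j) :=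
  edgeConn_one_and_monotone_general n A hdiag i j
end

section
/- Let A' be obtained from A by removing one edge: A' i₀ j₀ = 0 for some i₀, j₀ with A i₀ j₀ = 1, and A' i j = A i j for all (i, j) ≠ (i₀, j₀). Denote by cG K and cG' K the global K-connectivity of A and A', respectively. If cG 2 < cG' 2 + ((n(n−1) : ℝ≥0∞))⁻¹, then cG' 2 + cG 1 > cG 2 + cG' 1; that is, the component of the global connectivity due to shortest paths of length 2 is larger for the graph with the edge removed than for the original graph. -/
open scoped ENNReal

open scoped Classical in
lemma term_one (n : ℕ) (A : Matrix (Fin n) (Fin n) ℕ) (i j : Fin n) (hij : i ≠ j) :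
    (cKmat n A 1 i j : ℝ≥0∞) / (ellK n A 1 i j : ℝ≥0∞) = (A i j : ℝ≥0∞) := by
  by_cases h : A i j = 0
  · have hex : ¬ ∃ k : ℕ, 1 ≤ k ∧ k ≤ 1 ∧ (A ^ k) i j ≠ 0 := by
      rintro ⟨k, h1, h2, h3⟩
      have : k = 1 := le_antisymm h2 h1
      subst this; simp [pow_one, h] at h3
    rw [cKmat, if_neg hij, if_neg hex]
    simp [h]
  · have hset : {k : ℕ | 1 ≤ k ∧ k ≤ 1 ∧ (A ^ k) i j ≠ 0} = {1} := by
      ext k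
      simp only [Set.mem_setOf_eq, Set.mem_singleton_iff]
      constructor
      · rintro ⟨h1, h2, _⟩; exact le_antisymm h2 h1
      · rintro rfl; exact ⟨le_refl 1, le_refl 1, by simpa [pow_one] using h⟩
    have hex : ∃ k : ℕ, 1 ≤ k ∧ k ≤ 1 ∧ (A ^ k) i j ≠ 0 :=
      ⟨1, le_refl 1, le_refl 1, by simpa [pow_one] using h⟩
    rw [cKmat, ellK, if_neg hij, if_neg hij, if_pos hex, hset]
    simp [pow_one]

lemma gc_one (n : ℕ) (A : Matrix (Fin n) (Fin n) ℕ) :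
    globalConn n A 1 = ((n : ℝ≥0∞) * ((n : ℝ≥0∞) - 1))⁻¹ *
      ∑ i : Fin n, ∑ j ∈ Finset.univ.erase i, (A i j : ℝ≥0∞) := by
  rw [globalConn]
  congr 1
  refine Finset.sum_congr rfl fun i _ => Finset.sum_congr rfl fun j hj => ?_
  exact term_one n A i j (Finset.ne_of_mem_erase hj).symm

/-- Let `A'` be obtained from `A` by removing the edge `e(i₀ → j₀)`.
If `cG 2 < cG' 2 + (n(n−1))⁻¹`, then `cG' 2 + cG 1 > cG 2 + cG' 1`; that is, the
component of the global connectivity due to shortest paths of length `2` is larger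
for the graph with the edge removed than for the original graph. -/
theorem globalConn_length_two_component (n : ℕ) (hn : 2 ≤ n)
    (A A' : Matrix (Fin n) (Fin n) ℕ)
    (hA : ∀ i j, A i j = 0 ∨ A i j = 1) (hdiag : ∀ i, A i i = 0)
    (hA' : ∀ i j, A' i j = 0 ∨ A' i j = 1) (hdiag' : ∀ i, A' i i = 0)
    (i₀ j₀ : Fin n) (hedge : A i₀ j₀ = 1) (hremoved : A' i₀ j₀ = 0)
    (hrest : ∀ i j : Fin n, (i, j) ≠ (i₀, j₀) → A' i j = A i j)
    (hyp : globalConn n A 2 <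
      globalConn n A' 2 + ((n : ℝ≥0∞) * ((n : ℝ≥0∞) - 1))⁻¹) :
    globalConn n A' 2 + globalConn n A 1 >
      globalConn n A 2 + globalConn n A' 1 := by
  classical
  set ε : ℝ≥0∞ := ((n : ℝ≥0∞) * ((n : ℝ≥0∞) - 1))⁻¹ with hε
  have hij0 : i₀ ≠ j₀ := by
    rintro rfl
    rw [hdiag] at hedge
    exact one_ne_zero hedge.symm
  -- the inner sums differ by exactly 1
  have hsum : ∑ i : Fin n, ∑ j ∈ Finset.univ.erase i, (A i j : ℝ≥0∞)
      = (∑ i : Fin n, ∑ j ∈ Finset.univ.erase i, (A' i j : ℝ≥0∞)) + 1 := by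
    have hi₀ : ∑ j ∈ Finset.univ.erase i₀, (A i₀ j : ℝ≥0∞)
        = (∑ j ∈ Finset.univ.erase i₀, (A' i₀ j : ℝ≥0∞)) + 1 := by
      have hj₀mem : j₀ ∈ (Finset.univ.erase i₀) := by
        simp [Finset.mem_erase, hij0.symm]
      rw [← Finset.add_sum_erase _ _ hj₀mem, ← Finset.add_sum_erase _ _ hj₀mem,
        hedge, hremoved]
      have : ∑ j ∈ (Finset.univ.erase i₀).erase j₀, (A i₀ j : ℝ≥0∞)
          = ∑ j ∈ (Finset.univ.erase i₀).erase j₀, (A' i₀ j : ℝ≥0∞) := by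
        refine Finset.sum_congr rfl fun j hj => ?_
        have hj : j ≠ j₀ := Finset.ne_of_mem_erase hj
        rw [hrest i₀ j (by simp [hj])]
      rw [this]
      push_cast
      ring
    rw [← Finset.add_sum_erase _ _ (Finset.mem_univ i₀),
      ← Finset.add_sum_erase _ _ (Finset.mem_univ i₀), hi₀]
    have : ∑ i ∈ Finset.univ.erase i₀, ∑ j ∈ Finset.univ.erase i, (A i j : ℝ≥0∞)
        = ∑ i ∈ Finset.univ.erase i₀, ∑ j ∈ Finset.univ.erase i, (A' i j : ℝ≥0∞) := by
      refine Finset.sum_congr rfl fun i hi => Finset.sum_congr rfl fun j _ => ?_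
      have hi : i ≠ i₀ := Finset.ne_of_mem_erase hi
      rw [hrest i j (by simp [hi])]
    rw [this]
    ring
  have hεtop : ε ≠ ⊤ := by
    rw [hε]
    refine ENNReal.inv_ne_top.mpr (mul_ne_zero ?_ ?_)
    · simp only [ne_eq, Nat.cast_eq_zero]; omega
    · intro h
      rw [tsub_eq_zero_iff_le] at h
      have : (2 : ℝ≥0∞) ≤ (n : ℝ≥0∞) := by exact_mod_cast hn
      have := this.trans h
      norm_num at this
  have key : globalConn n A 1 = globalConn n A' 1 + ε := by
    rw [gc_one, gc_one, hsum, mul_add, mul_one]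
  have hfin : globalConn n A' 1 ≠ ⊤ := by
    rw [gc_one]
    refine ENNReal.mul_ne_top hεtop ?_
    refine (ENNReal.sum_lt_top.mpr fun i _ => ?_).ne
    exact ENNReal.sum_lt_top.mpr fun j _ => ENNReal.natCast_lt_top _
  have h2 := ENNReal.add_lt_add_right hfin hyp
  rw [gt_iff_lt, key, show globalConn n A' 2 + (globalConn n A' 1 + ε)
      = globalConn n A' 2 + ε + globalConn n A' 1 by ring]
  exact h2
end
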